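/- arXiv:1210.5001 — 4 statements merged into one kernel-verified Lean document; each statement's English description precedes it below -/
import Mathlib

section
/- A 1-Lipschitz function f : ℤ_p → ℤ_p is measure-preserving (with respect to the Haar probability measure on ℤ_p) if and only if it is an isometry, i.e., |f(x) − f(y)|_p = |x − y|_p for all x, y ∈ ℤ_p. -/
open MeasureTheory Finset

namespace VDP

noncomputable instance (p : ℕ) [Fact p.Prime] : MeasurableSpace ℤ_[p] := borel _
instance (p : ℕ) [Fact p.Prime] : BorelSpace ℤ_[p] := ⟨rfl⟩

/-- The Haar probability measure on `ℤ_[p]`. -/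
noncomputable def haarZp (p : ℕ) [Fact p.Prime] : Measure ℤ_[p] :=
  Measure.addHaarMeasure ⊤

/-- `f` is 1-Lipschitz. -/
def IsLip (p : ℕ) [Fact p.Prime] (f : ℤ_[p] → ℤ_[p]) : Prop :=
  ∀ x y : ℤ_[p], ‖f x - f y‖ ≤ ‖x - y‖

/-- The van der Put basis function `χ(m, x)` on `ℤ_[p]` (with `⌊log_p 0⌋ = 0`). -/
noncomputable def chi (p : ℕ) [Fact p.Prime] (m : ℕ) (x : ℤ_[p]) : ℤ_[p] :=
  if ‖x - (m : ℤ_[p])‖ ≤ ((p : ℝ) ^ (Nat.log p m + 1))⁻¹ then 1 else 0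

/-- `q(m) = m_s p^s`, the leading term of the `p`-adic expansion of `m`. -/
def q (p m : ℕ) : ℕ := m / p ^ Nat.log p m * p ^ Nat.log p m

/-- `f` has van der Put expansion with coefficients `B`. -/
def vdpExpansion (p : ℕ) [Fact p.Prime] (f : ℤ_[p] → ℤ_[p]) (B : ℕ → ℤ_[p]) : Prop :=
  ∀ x, f x = ∑' m, B m * chi p m x

/-- `f` is bijective modulo `p^n`. -/
def BijModPow (p : ℕ) [Fact p.Prime] (f : ℤ_[p] → ℤ_[p]) (n : ℕ) : Prop :=
  Function.Bijective fun a : ZMod (p ^ n) => PadicInt.toZModPow n (f ((a.val : ℕ) : ℤ_[p]))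

/-- `f` is transitive modulo `p^n`. -/
def TransModPow (p : ℕ) [Fact p.Prime] (f : ℤ_[p] → ℤ_[p]) (n : ℕ) : Prop :=
  ∀ x : ℤ_[p], ∀ a : ZMod (p ^ n), ∃ k : ℕ, PadicInt.toZModPow n (f^[k] x) = a

/-- The `i`-th digit of the canonical `p`-adic expansion of `x`. -/
noncomputable def digit (p : ℕ) [Fact p.Prime] (x : ℤ_[p]) (i : ℕ) : ℕ :=
  x.appr (i + 1) / p ^ i % p

end VDP

/-!
A 1-Lipschitz map sends each residue class modulo `p ^ k` into a residue class, and every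
residue class modulo `p ^ k` has Haar measure `p⁻ᵏ`. If `f` preserves the measure, two distinct
classes cannot land in the same one (their union, of measure `2 p⁻ᵏ`, would lie in a preimage of
measure `p⁻ᵏ`), so `f` is injective modulo every `p ^ k`, which for a 1-Lipschitz map says that
it is an isometry. Conversely an isometry induces bijections modulo every `p ^ k`, so it pulls
residue classes back to residue classes of the same measure; these classes form a generating
π-system, hence `f` preserves the measure.
-/

open MeasureTheory Metric
open scoped ENNReal

namespace PadicInt

variable {p : ℕ} [Fact p.Prime]

theorem toZModPow_eq_iff_norm_sub_le (k : ℕ) (x y : ℤ_[p]) :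
    toZModPow k x = toZModPow k y ↔ ‖x - y‖ ≤ (p : ℝ) ^ (-(k : ℤ)) := by
  rw [← sub_eq_zero, ← map_sub, ← RingHom.mem_ker, ker_toZModPow,
    ← norm_le_pow_iff_mem_span_pow]

theorem preimage_toZModPow_eq_closedBall (k : ℕ) (x : ℤ_[p]) :
    toZModPow k ⁻¹' {toZModPow k x} = closedBall x ((p : ℝ) ^ (-(k : ℤ))) := by
  ext y
  rw [Set.mem_preimage, Set.mem_singleton_iff, mem_closedBall, dist_eq_norm,
    toZModPow_eq_iff_norm_sub_le]

theorem isClopen_preimage_toZModPow (k : ℕ) (r : ZMod (p ^ k)) :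
    IsClopen (toZModPow k ⁻¹' {r} : Set ℤ_[p]) := by
  obtain ⟨x, rfl⟩ := ZMod.ringHom_surjective (toZModPow k : ℤ_[p] →+* _) r
  rw [preimage_toZModPow_eq_closedBall]
  exact IsUltrametricDist.isClopen_closedBall x
    (zpow_pos (by exact_mod_cast (Fact.out : p.Prime).pos) _).ne'

theorem norm_sub_le_of_forall_toZModPow {x y z w : ℤ_[p]}
    (h : ∀ k, toZModPow k x = toZModPow k y → toZModPow k z = toZModPow k w) :
    ‖z - w‖ ≤ ‖x - y‖ := by
  rcases eq_or_ne x y with rfl | hxy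
  · rw [ext_of_toZModPow.mp fun k => h k rfl, sub_self, sub_self]
  · have hnorm := norm_eq_zpow_neg_valuation (sub_ne_zero.mpr hxy)
    rw [hnorm, ← toZModPow_eq_iff_norm_sub_le]
    exact h _ ((toZModPow_eq_iff_norm_sub_le _ _ _).mpr hnorm.le)

theorem preimage_toZModPow_subset_of_le {k l : ℕ} (hlk : l ≤ k) {r : ZMod (p ^ k)}
    {q : ZMod (p ^ l)} (h : (toZModPow k ⁻¹' {r} ∩ toZModPow l ⁻¹' {q} : Set ℤ_[p]).Nonempty) :
    toZModPow k ⁻¹' {r} ⊆ toZModPow l ⁻¹' {q} := by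
  obtain ⟨x, hxr, hxq⟩ := h
  intro y hyr
  simp only [Set.mem_preimage, Set.mem_singleton_iff] at hxr hxq hyr ⊢
  rw [← cast_toZModPow l k hlk, hyr, ← hxr, cast_toZModPow l k hlk, hxq]

theorem preimage_toZModPow_zero_eq_univ (r : ZMod (p ^ 0)) :
    (toZModPow 0 ⁻¹' {r} : Set ℤ_[p]) = Set.univ := by
  have : Subsingleton (ZMod (p ^ 0)) := by rw [pow_zero]; infer_instance
  exact Set.eq_univ_of_forall fun _ => Subsingleton.elim _ _

variable (p) in
def congruenceClasses : Set (Set ℤ_[p]) :=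
  {s | ∃ (k : ℕ) (r : ZMod (p ^ k)), toZModPow k ⁻¹' {r} = s}

theorem isPiSystem_congruenceClasses : IsPiSystem (congruenceClasses p) := by
  rintro _ ⟨k, r, rfl⟩ _ ⟨l, q, rfl⟩ hne
  rcases le_total l k with hlk | hkl
  · rw [Set.inter_eq_left.mpr (preimage_toZModPow_subset_of_le hlk hne)]
    exact ⟨k, r, rfl⟩
  · rw [Set.inter_eq_right.mpr (preimage_toZModPow_subset_of_le hkl (Set.inter_comm .. ▸ hne))]
    exact ⟨l, q, rfl⟩

theorem isTopologicalBasis_congruenceClasses :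
    TopologicalSpace.IsTopologicalBasis (congruenceClasses p) := by
  refine TopologicalSpace.isTopologicalBasis_of_isOpen_of_nhds ?_ fun x U hxU hU => ?_
  · rintro _ ⟨k, r, rfl⟩
    exact (isClopen_preimage_toZModPow k r).isOpen
  · obtain ⟨ε, hε, hball⟩ := Metric.isOpen_iff.mp hU x hxU
    obtain ⟨k, hk⟩ := exists_pow_neg_lt p hε
    refine ⟨_, ⟨k, toZModPow k x, rfl⟩, rfl, ?_⟩
    rw [preimage_toZModPow_eq_closedBall]
    exact (closedBall_subset_ball hk).trans hball

theorem measure_ext_of_preimage_toZModPow {μ ν : Measure ℤ_[p]} [IsFiniteMeasure μ]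
    (h : ∀ k (r : ZMod (p ^ k)), μ (toZModPow k ⁻¹' {r}) = ν (toZModPow k ⁻¹' {r})) : μ = ν := by
  refine ext_of_generate_finite _ ?_ isPiSystem_congruenceClasses ?_ ?_
  · exact BorelSpace.measurable_eq.trans
      isTopologicalBasis_congruenceClasses.borel_eq_generateFrom
  · rintro _ ⟨k, r, rfl⟩
    exact h k r
  · simpa only [preimage_toZModPow_zero_eq_univ] using h 0 0

end PadicInt

namespace VDP

open PadicInt

variable {p : ℕ} [Fact p.Prime]

instance : (haarZp p).IsAddHaarMeasure := by
  unfold haarZp; infer_instance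

theorem haarZp_univ : haarZp p Set.univ = 1 := by
  rw [haarZp, ← TopologicalSpace.PositiveCompacts.coe_top (α := ℤ_[p])]
  exact Measure.addHaarMeasure_self

instance : IsProbabilityMeasure (haarZp p) := ⟨haarZp_univ⟩

theorem haarZp_preimage_toZModPow (k : ℕ) (r : ZMod (p ^ k)) :
    haarZp p (toZModPow k ⁻¹' {r}) = ((p : ℝ≥0∞) ^ k)⁻¹ := by
  obtain ⟨x, rfl⟩ := ZMod.ringHom_surjective (toZModPow k : ℤ_[p] →+* _) r
  set K := (toZModPow k : ℤ_[p] →+* ZMod (p ^ k)).toAddMonoidHom.ker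
  have hfibre : toZModPow k ⁻¹' {toZModPow k x} = (fun y => -x + y) ⁻¹' (K : Set ℤ_[p]) := by
    ext y
    simp only [K, Set.mem_preimage, Set.mem_singleton_iff, SetLike.mem_coe,
      AddMonoidHom.mem_ker, RingHom.toAddMonoidHom_eq_coe, AddMonoidHom.coe_coe, map_add, map_neg]
    rw [neg_add_eq_zero, eq_comm]
  have hindex : K.index = p ^ k := by
    rw [AddSubgroup.index_ker, AddMonoidHom.range_eq_top.mpr (ZMod.ringHom_surjective _),
      AddSubgroup.card_top, Nat.card_zmod]
  have hK : (p : ℝ≥0∞) ^ k * haarZp p K = 1 := by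
    have := K.index_mul_measure
      (isClopen_preimage_toZModPow k 0).isClosed.measurableSet (haarZp p)
    rwa [hindex, haarZp_univ, Nat.cast_pow] at this
  rw [hfibre, measure_preimage_add]
  exact ENNReal.eq_inv_of_mul_eq_one_left (by rwa [mul_comm])

variable {f : ℤ_[p] → ℤ_[p]}

theorem IsLip.toZModPow_apply_eq (hf : IsLip p f) {k : ℕ} {x y : ℤ_[p]}
    (h : toZModPow k x = toZModPow k y) : toZModPow k (f x) = toZModPow k (f y) := by
  rw [toZModPow_eq_iff_norm_sub_le] at h ⊢
  exact (hf x y).trans h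

theorem IsLip.toZModPow_eq_of_measurePreserving (hf : IsLip p f)
    (hmp : MeasurePreserving f (haarZp p) (haarZp p)) {k : ℕ} {x y : ℤ_[p]}
    (h : toZModPow k (f x) = toZModPow k (f y)) : toZModPow k x = toZModPow k y := by
  by_contra hxy
  set c := ((p : ℝ≥0∞) ^ k)⁻¹
  have hsub : toZModPow k ⁻¹' {toZModPow k x} ∪ toZModPow k ⁻¹' {toZModPow k y} ⊆
      f ⁻¹' (toZModPow k ⁻¹' {toZModPow k (f x)}) := by
    rintro z (hz | hz) <;> simp only [Set.mem_preimage, Set.mem_singleton_iff] at hz ⊢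
    · exact hf.toZModPow_apply_eq hz
    · exact (hf.toZModPow_apply_eq hz).trans h.symm
  have hcc : c + c ≤ c := calc
    c + c = haarZp p (toZModPow k ⁻¹' {toZModPow k x} ∪ toZModPow k ⁻¹' {toZModPow k y}) := by
      rw [measure_union ((Set.disjoint_singleton.mpr hxy).preimage _)
        (isClopen_preimage_toZModPow k _).isClosed.measurableSet,
        haarZp_preimage_toZModPow, haarZp_preimage_toZModPow]
    _ ≤ haarZp p (f ⁻¹' (toZModPow k ⁻¹' {toZModPow k (f x)})) := measure_mono hsub
    _ = c := by
      rw [hmp.measure_preimage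
        (isClopen_preimage_toZModPow k _).isClosed.measurableSet.nullMeasurableSet,
        haarZp_preimage_toZModPow]
  have hc : c ≠ 0 := ENNReal.inv_ne_zero.mpr (ENNReal.pow_ne_top ENNReal.coe_ne_top)
  have hc_top : c ≠ ⊤ :=
    ENNReal.inv_ne_top.mpr (pow_ne_zero _ (by exact_mod_cast (Fact.out : p.Prime).ne_zero))
  exact hc <| nonpos_iff_eq_zero.mp <|
    (ENNReal.add_le_add_iff_left hc_top).mp (by rwa [add_zero])

theorem toZModPow_apply_eq_iff_of_isometry (hf : ∀ x y, ‖f x - f y‖ = ‖x - y‖) {k : ℕ}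
    {x y : ℤ_[p]} :
    toZModPow k (f x) = toZModPow k (f y) ↔ toZModPow k x = toZModPow k y := by
  rw [toZModPow_eq_iff_norm_sub_le, toZModPow_eq_iff_norm_sub_le, hf]

theorem exists_toZModPow_apply_eq_of_isometry (hf : ∀ x y, ‖f x - f y‖ = ‖x - y‖) (k : ℕ)
    (r : ZMod (p ^ k)) :
    ∃ x, toZModPow k (f x) = r := by
  have : NeZero (p ^ k) := ⟨pow_ne_zero _ (Fact.out : p.Prime).ne_zero⟩
  have hinj : Function.Injective fun a : ZMod (p ^ k) => toZModPow k (f a.val) := by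
    intro a b hab
    simpa only [map_natCast, ZMod.natCast_zmod_val] using
      (toZModPow_apply_eq_iff_of_isometry hf).mp hab
  obtain ⟨a, ha⟩ := Finite.injective_iff_surjective.mp hinj r
  exact ⟨_, ha⟩

theorem measurePreserving_haarZp_of_isometry (hf : ∀ x y, ‖f x - f y‖ = ‖x - y‖) :
    MeasurePreserving f (haarZp p) (haarZp p) := by
  have hcont : Continuous f :=
    (Isometry.of_dist_eq fun x y => by rw [dist_eq_norm, dist_eq_norm, hf]).continuous
  refine ⟨hcont.measurable, measure_ext_of_preimage_toZModPow fun k r => ?_⟩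
  obtain ⟨x, rfl⟩ := exists_toZModPow_apply_eq_of_isometry hf k r
  have hpre :
      f ⁻¹' (toZModPow k ⁻¹' {toZModPow k (f x)}) = toZModPow k ⁻¹' {toZModPow k x} := by
    ext y
    exact toZModPow_apply_eq_iff_of_isometry hf
  rw [Measure.map_apply hcont.measurable (isClopen_preimage_toZModPow k _).isClosed.measurableSet,
    hpre, haarZp_preimage_toZModPow, haarZp_preimage_toZModPow]

end VDP

open VDP MeasureTheory in
theorem stmt1 (p : ℕ) [Fact p.Prime] (f : ℤ_[p] → ℤ_[p]) (hf : IsLip p f) :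
    MeasurePreserving f (haarZp p) (haarZp p) ↔
      ∀ x y : ℤ_[p], ‖f x - f y‖ = ‖x - y‖ :=
  ⟨fun hmp x y => le_antisymm (hf x y) <| PadicInt.norm_sub_le_of_forall_toZModPow fun _ =>
    hf.toZModPow_eq_of_measurePreserving hmp, measurePreserving_haarZp_of_isometry⟩
end

section
/- A 1-Lipschitz function f : ℤ_p → ℤ_p is measure-preserving if and only if for every integer n ≥ 1 the induced map on ℤ/p^nℤ is a bijection. -/
open MeasureTheory Finset

section Aux

open MeasureTheory Finset VDP
open scoped ENNReal

variable (p : ℕ) [Fact p.Prime]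

private lemma VDPkey (n : ℕ) (x y : ℤ_[p]) :
    PadicInt.toZModPow n x = PadicInt.toZModPow n y ↔ ‖x - y‖ ≤ (p : ℝ) ^ (-n : ℤ) := by
  rw [← RingHom.sub_mem_ker_iff, PadicInt.ker_toZModPow,
    ← PadicInt.norm_le_pow_iff_mem_span_pow]

/-- residue ball -/
private def VDPfib (n : ℕ) (a : ZMod (p ^ n)) : Set ℤ_[p] :=
  (PadicInt.toZModPow n) ⁻¹' {a}

private lemma VDPmem_fib {n : ℕ} {a : ZMod (p ^ n)} {x : ℤ_[p]} :
    x ∈ VDPfib p n a ↔ PadicInt.toZModPow n x = a := Iff.rfl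

private lemma VDPisOpen_fib (n : ℕ) (a : ZMod (p ^ n)) : IsOpen (VDPfib p n a) := by
  rw [Metric.isOpen_iff]
  intro x hx
  refine ⟨(p : ℝ) ^ (-n : ℤ),
    zpow_pos (by exact_mod_cast (Fact.out : p.Prime).pos) _, fun y hy => ?_⟩
  rw [VDPmem_fib] at hx ⊢
  rw [← hx, VDPkey p n y x]
  rw [Metric.mem_ball, dist_eq_norm] at hy
  exact hy.le

private lemma VDPlift_eq (n : ℕ) (a : ZMod (p ^ n)) :
    PadicInt.toZModPow n ((a.val : ℕ) : ℤ_[p]) = a := by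
  haveI : NeZero (p ^ n) := ⟨pow_ne_zero n (Fact.out : p.Prime).ne_zero⟩
  rw [map_natCast, ZMod.natCast_val, ZMod.cast_id]

private lemma VDPuniv_eq_one : haarZp p Set.univ = 1 := by
  have : ((⊤ : TopologicalSpace.PositiveCompacts ℤ_[p]) : Set ℤ_[p]) = Set.univ :=
    TopologicalSpace.PositiveCompacts.coe_top
  rw [haarZp, ← this]
  exact Measure.addHaarMeasure_self

private lemma VDPdisj (n : ℕ) :
    Pairwise (Function.onFun Disjoint fun a : ZMod (p ^ n) => VDPfib p n a) := by
  intro a b hab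
  refine Set.disjoint_left.mpr fun x hx hx' => hab ?_
  rw [VDPmem_fib] at hx hx'
  rw [← hx, hx']

private lemma VDPmeas_fib (n : ℕ) (a : ZMod (p ^ n)) :
    haarZp p (VDPfib p n a) = ((p : ℝ≥0∞) ^ n)⁻¹ := by
  haveI : NeZero (p ^ n) := ⟨pow_ne_zero n (Fact.out : p.Prime).ne_zero⟩
  haveI : Measure.IsAddLeftInvariant (haarZp p) := by
    unfold haarZp; infer_instance
  have hconst : ∀ a : ZMod (p ^ n), haarZp p (VDPfib p n a) = haarZp p (VDPfib p n 0) := by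
    intro a
    have hpre : (fun x : ℤ_[p] => ((a.val : ℕ) : ℤ_[p]) + x) ⁻¹' (VDPfib p n a)
        = VDPfib p n 0 := by
      ext x
      simp only [Set.mem_preimage, VDPmem_fib, map_add, VDPlift_eq]
      constructor
      · intro h; have := h; rwa [add_eq_left] at this
      · intro h; rw [h, add_zero]
    rw [← hpre, measure_preimage_add]
  have hsum : ∑ a : ZMod (p ^ n), haarZp p (VDPfib p n a) = 1 := by
    rw [← VDPuniv_eq_one p]
    have huniv : (⋃ a : ZMod (p ^ n), VDPfib p n a) = Set.univ := by
      ext x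
      simp only [Set.mem_iUnion, Set.mem_univ, iff_true]
      exact ⟨_, rfl⟩
    rw [← huniv, measure_iUnion (VDPdisj p n)
      (fun a => (VDPisOpen_fib p n a).measurableSet), tsum_fintype]
  have hcard : (Fintype.card (ZMod (p ^ n)) : ℝ≥0∞) = (p : ℝ≥0∞) ^ n := by
    rw [ZMod.card]; push_cast; ring
  have hsum2 : (p : ℝ≥0∞) ^ n * haarZp p (VDPfib p n 0) = 1 := by
    calc (p : ℝ≥0∞) ^ n * haarZp p (VDPfib p n 0)
        = (Fintype.card (ZMod (p ^ n)) : ℝ≥0∞) * haarZp p (VDPfib p n 0) := by rw [hcard]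
      _ = ∑ a : ZMod (p ^ n), haarZp p (VDPfib p n a) := by
          rw [Finset.sum_congr rfl fun a _ => hconst a, Finset.sum_const, nsmul_eq_mul,
            Finset.card_univ]
      _ = 1 := hsum
  have hp0 : (p : ℝ≥0∞) ^ n ≠ 0 := by
    apply pow_ne_zero
    exact_mod_cast (Fact.out : p.Prime).ne_zero
  have hptop : (p : ℝ≥0∞) ^ n ≠ ⊤ := ENNReal.pow_ne_top (ENNReal.natCast_ne_top p)
  have h0 : haarZp p (VDPfib p n 0) = ((p : ℝ≥0∞) ^ n)⁻¹ := by
    calc haarZp p (VDPfib p n 0)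
        = ((p : ℝ≥0∞) ^ n)⁻¹ * ((p : ℝ≥0∞) ^ n * haarZp p (VDPfib p n 0)) := by
          rw [← mul_assoc, ENNReal.inv_mul_cancel hp0 hptop, one_mul]
      _ = ((p : ℝ≥0∞) ^ n)⁻¹ := by rw [hsum2, mul_one]
  rw [hconst a, h0]

private lemma VDPmeas_preimage (n : ℕ) (S : Finset (ZMod (p ^ n))) :
    haarZp p ((PadicInt.toZModPow n) ⁻¹' ↑S) = S.card * ((p : ℝ≥0∞) ^ n)⁻¹ := by
  have : (PadicInt.toZModPow n) ⁻¹' (↑S : Set (ZMod (p ^ n)))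
      = ⋃ a ∈ S, VDPfib p n a := by
    ext x
    simp [VDPfib]
  rw [this, measure_biUnion_finset ((VDPdisj p n).set_pairwise _)
    (fun a _ => (VDPisOpen_fib p n a).measurableSet)]
  simp [VDPmeas_fib p n, Finset.sum_const, nsmul_eq_mul]

private lemma VDPpreimage_fib (f : ℤ_[p] → ℤ_[p]) (hf : IsLip p f) (n : ℕ)
    (b : ZMod (p ^ n)) :
    f ⁻¹' VDPfib p n b
      = (PadicInt.toZModPow n) ⁻¹'
        ((fun a : ZMod (p ^ n) => PadicInt.toZModPow n (f ((a.val : ℕ) : ℤ_[p]))) ⁻¹' {b}) := by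
  ext x
  have hx : PadicInt.toZModPow n (f x)
      = PadicInt.toZModPow n (f (((PadicInt.toZModPow n x).val : ℕ) : ℤ_[p])) := by
    rw [VDPkey]
    refine le_trans (hf _ _) ?_
    rw [← VDPkey]
    exact (VDPlift_eq p n _).symm
  simp only [Set.mem_preimage, Set.mem_singleton_iff, VDPmem_fib]
  rw [hx]

end Aux

open scoped ENNReal in
open VDP MeasureTheory in
theorem stmt2 (p : ℕ) [Fact p.Prime] (f : ℤ_[p] → ℤ_[p]) (hf : IsLip p f) :
    MeasurePreserving f (haarZp p) (haarZp p) ↔ ∀ n : ℕ, 1 ≤ n → BijModPow p f n := by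
  have hp0 : ∀ n : ℕ, ((p : ℝ≥0∞) ^ n) ≠ 0 := fun n =>
    pow_ne_zero n (by exact_mod_cast (Fact.out : p.Prime).ne_zero)
  have hptop : ∀ n : ℕ, ((p : ℝ≥0∞) ^ n) ≠ ⊤ := fun n =>
    ENNReal.pow_ne_top (ENNReal.natCast_ne_top p)
  have hmeas : Measurable f := by
    have hlip : LipschitzWith 1 f := by
      apply LipschitzWith.of_dist_le_mul
      intro x y
      simp only [NNReal.coe_one, one_mul, dist_eq_norm]
      exact hf x y
    exact hlip.continuous.measurable
  constructor
  · -- measure preserving ⟹ bijective mod p^n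
    intro h n _
    set g : ZMod (p ^ n) → ZMod (p ^ n) :=
      fun a => PadicInt.toZModPow n (f ((a.val : ℕ) : ℤ_[p])) with hg
    rw [BijModPow, ← hg, Function.bijective_iff_existsUnique]
    intro b
    set S : Finset (ZMod (p ^ n)) := Finset.univ.filter (fun a => g a = b) with hS
    have hSset : ((fun a : ZMod (p ^ n) =>
        PadicInt.toZModPow n (f ((a.val : ℕ) : ℤ_[p]))) ⁻¹' {b}) = ↑S := by
      ext a; simp [hS, hg]
    have hμ : haarZp p (f ⁻¹' VDPfib p n b) = S.card * ((p : ℝ≥0∞) ^ n)⁻¹ := by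
      rw [VDPpreimage_fib p f hf n b, hSset, VDPmeas_preimage]
    have hμ' : haarZp p (f ⁻¹' VDPfib p n b) = ((p : ℝ≥0∞) ^ n)⁻¹ := by
      rw [h.measure_preimage (VDPisOpen_fib p n b).measurableSet.nullMeasurableSet,
        VDPmeas_fib]
    have hcard : (S.card : ℝ≥0∞) = 1 := by
      have hcinv : ((p : ℝ≥0∞) ^ n)⁻¹ * ((p : ℝ≥0∞) ^ n) = 1 :=
        ENNReal.inv_mul_cancel (hp0 n) (hptop n)
      calc (S.card : ℝ≥0∞)
          = S.card * (((p : ℝ≥0∞) ^ n)⁻¹ * ((p : ℝ≥0∞) ^ n)) := by rw [hcinv, mul_one]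
        _ = (S.card * ((p : ℝ≥0∞) ^ n)⁻¹) * (p : ℝ≥0∞) ^ n := by ring
        _ = ((p : ℝ≥0∞) ^ n)⁻¹ * (p : ℝ≥0∞) ^ n := by rw [← hμ, hμ']
        _ = 1 := hcinv
    have hcard' : S.card = 1 := by exact_mod_cast hcard
    obtain ⟨a, ha⟩ := Finset.card_eq_one.mp hcard'
    refine ⟨a, ?_, ?_⟩
    · have : a ∈ S := ha ▸ Finset.mem_singleton_self a
      simpa [hS] using this
    · intro a' ha'
      have : a' ∈ S := by simp [hS, ha']
      rw [ha] at this
      simpa using this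
  · -- bijective mod p^n ⟹ measure preserving
    intro h
    have hbij : ∀ n : ℕ, Function.Bijective
        (fun a : ZMod (p ^ n) => PadicInt.toZModPow n (f ((a.val : ℕ) : ℤ_[p]))) := by
      intro n
      rcases Nat.eq_zero_or_pos n with rfl | hn
      · haveI : Subsingleton (ZMod (p ^ 0)) := by
          rw [pow_zero]; infer_instance
        exact ⟨fun a b _ => Subsingleton.elim a b, fun b => ⟨b, Subsingleton.elim _ _⟩⟩
      · exact h n hn
    refine ⟨hmeas, ?_⟩
    haveI : IsProbabilityMeasure (haarZp p) := ⟨VDPuniv_eq_one p⟩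
    haveI : IsProbabilityMeasure ((haarZp p).map f) :=
      Measure.isProbabilityMeasure_map hmeas.aemeasurable
    set C : Set (Set ℤ_[p]) := {s | ∃ n : ℕ, ∃ a : ZMod (p ^ n), s = VDPfib p n a} with hC
    -- fib inclusion lemma
    have hsub : ∀ (n m : ℕ) (a : ZMod (p ^ n)) (b : ZMod (p ^ m)), n ≤ m →
        (VDPfib p n a ∩ VDPfib p m b).Nonempty → VDPfib p m b ⊆ VDPfib p n a := by
      intro n m a b hnm ⟨x, hxa, hxb⟩ y hy
      rw [VDPmem_fib] at hxa hxb hy ⊢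
      have hnorm : ‖y - x‖ ≤ (p : ℝ) ^ (-m : ℤ) := by
        rw [← VDPkey]; rw [hy, hxb]
      have hle : (p : ℝ) ^ (-m : ℤ) ≤ (p : ℝ) ^ (-n : ℤ) := by
        apply zpow_le_zpow_right₀
        · exact_mod_cast (Fact.out : p.Prime).one_lt.le
        · omega
      rw [← hxa, VDPkey]
      exact hnorm.trans hle
    have hpi : IsPiSystem C := by
      rintro s ⟨n, a, rfl⟩ t ⟨m, b, rfl⟩ hne
      rcases le_total n m with hnm | hmn
      · rw [Set.inter_eq_right.mpr (hsub n m a b hnm hne)]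
        exact ⟨m, b, rfl⟩
      · rw [Set.inter_eq_left.mpr (hsub m n b a hmn (by rwa [Set.inter_comm]))]
        exact ⟨n, a, rfl⟩
    have hgen : (inferInstance : MeasurableSpace ℤ_[p])
        = MeasurableSpace.generateFrom C := by
      rw [BorelSpace.measurable_eq (α := ℤ_[p]), borel]
      apply le_antisymm
      · apply MeasurableSpace.generateFrom_le
        intro U hU
        have hUopen : IsOpen U := hU
        have hUeq : U = ⋃ i : {q : (Σ n : ℕ, ZMod (p ^ n)) // VDPfib p q.1 q.2 ⊆ U},
            VDPfib p i.1.1 i.1.2 := by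
          apply Set.Subset.antisymm
          · intro x hx
            obtain ⟨ε, hε, hball⟩ := Metric.isOpen_iff.mp hUopen x hx
            obtain ⟨n, hn⟩ := exists_pow_lt_of_lt_one hε
              (by
                rw [inv_lt_one_iff₀]
                right
                exact_mod_cast (Fact.out : p.Prime).one_lt : (p : ℝ)⁻¹ < 1)
            have hfibsub : VDPfib p n (PadicInt.toZModPow n x) ⊆ U := by
              intro y hy
              apply hball
              rw [Metric.mem_ball, dist_eq_norm]
              have : ‖y - x‖ ≤ (p : ℝ) ^ (-n : ℤ) := by
                rw [← VDPkey]; exact hy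
              calc ‖y - x‖ ≤ (p : ℝ) ^ (-n : ℤ) := this
                _ = ((p : ℝ)⁻¹) ^ n := by
                    rw [zpow_neg, zpow_natCast, inv_pow]
                _ < ε := hn
            exact Set.mem_iUnion.mpr ⟨⟨⟨n, PadicInt.toZModPow n x⟩, hfibsub⟩, rfl⟩
          · exact Set.iUnion_subset fun i => i.2
        rw [hUeq]
        exact MeasurableSet.iUnion fun i =>
          MeasurableSpace.measurableSet_generateFrom ⟨i.1.1, i.1.2, rfl⟩
      · apply MeasurableSpace.generateFrom_le
        rintro s ⟨n, a, rfl⟩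
        exact MeasurableSpace.measurableSet_generateFrom (VDPisOpen_fib p n a)
    apply MeasureTheory.ext_of_generate_finite C hgen hpi
    · rintro s ⟨n, b, rfl⟩
      rw [Measure.map_apply hmeas (VDPisOpen_fib p n b).measurableSet]
      set g : ZMod (p ^ n) → ZMod (p ^ n) :=
        fun a => PadicInt.toZModPow n (f ((a.val : ℕ) : ℤ_[p])) with hg
      set S : Finset (ZMod (p ^ n)) := Finset.univ.filter (fun a => g a = b) with hS
      have hSset : (g ⁻¹' {b}) = ↑S := by ext a; simp [hS]
      have hcard : S.card = 1 := by
        obtain ⟨a, ha, hu⟩ := Function.bijective_iff_existsUnique _ |>.mp (hbij n) b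
        apply Finset.card_eq_one.mpr ⟨a, ?_⟩
        ext a'
        simp only [hS, Finset.mem_filter, Finset.mem_univ, true_and,
          Finset.mem_singleton]
        exact ⟨fun h' => hu a' h', fun h' => h' ▸ ha⟩
      rw [VDPpreimage_fib p f hf n b, show (fun a : ZMod (p ^ n) =>
          PadicInt.toZModPow n (f ((a.val : ℕ) : ℤ_[p]))) ⁻¹' {b} = ↑S from hSset,
        VDPmeas_preimage, hcard, VDPmeas_fib]
      simp
    · rw [Measure.map_apply hmeas MeasurableSet.univ, Set.preimage_univ]
end

section
/- A continuous function f : ℤ_p → ℤ_p with van der Put expansion f(x) = Σ_{m≥0} B_m χ(m,x) is 1-Lipschitz if and only if |B_m|_p ≤ p^{−⌊log_p m⌋} for all m ≥ 0 (with the convention ⌊log_p 0⌋ = 0). -/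
open MeasureTheory Finset

/-!
For `m ≥ p`, write `r = m mod p^s` with `s = ⌊log_p m⌋`. Evaluating the expansion at the natural
numbers `m` and `r` only involves finitely many terms, and all of them cancel except `B_m`, so
`B_m = f(m) - f(r)` with `|m - r|_p ≤ p^{-s}`; this gives the bound when `f` is 1-Lipschitz.
Conversely, `χ(m, ·)` is constant on balls of radius `p^{-s-1}`, so in the expansion of
`f(x) - f(y)` the `m`-th term vanishes unless `|x - y|_p ≥ p^{-s}`, in which case it is bounded
by `|B_m|_p ≤ p^{-s}`; the ultrametric inequality for `tsum` concludes.
-/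

open Filter Topology

theorem Nat.tendsto_inv_pow_log_atTop {b : ℕ} (hb : 1 < b) :
    Tendsto (fun m => ((b : ℝ) ^ Nat.log b m)⁻¹) atTop (𝓝 0) :=
  tendsto_inv_atTop_zero.comp <| (tendsto_pow_atTop_atTop_of_one_lt (by exact_mod_cast hb)).comp <|
    tendsto_atTop_atTop.2 fun n => ⟨b ^ n, fun _ hm => Nat.le_log_of_pow_le hb hm⟩

namespace PadicInt

variable {p : ℕ} [Fact p.Prime]

theorem norm_natCast_sub_mod_pow_le (m s : ℕ) :
    ‖(m : ℤ_[p]) - (m % p ^ s : ℕ)‖ ≤ ((p : ℝ) ^ s)⁻¹ := by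
  have hsub : (m : ℤ_[p]) - (m % p ^ s : ℕ) = (p : ℤ_[p]) ^ s * (m / p ^ s : ℕ) := by
    have h := congrArg (Nat.cast : ℕ → ℤ_[p]) (Nat.div_add_mod m (p ^ s))
    push_cast at h
    rw [← h]
    ring
  rw [hsub, norm_mul, norm_p_pow, zpow_neg, zpow_natCast]
  exact mul_le_of_le_one_right (by positivity) (norm_le_one _)

theorem inv_pow_le_norm_of_inv_pow_succ_lt {x : ℤ_[p]} {n : ℕ}
    (h : ((p : ℝ) ^ (n + 1))⁻¹ < ‖x‖) : ((p : ℝ) ^ n)⁻¹ ≤ ‖x‖ := by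
  by_contra! hlt
  rw [← zpow_natCast, ← zpow_neg, show -(n : ℤ) = -((n + 1 : ℕ) : ℤ) + 1 by push_cast; ring,
    ← norm_le_pow_iff_norm_lt_pow_add_one, zpow_neg, zpow_natCast] at hlt
  exact hlt.not_gt h

end PadicInt

namespace VDP

variable {p : ℕ} [Fact p.Prime]

theorem chi_natCast (k a : ℕ) :
    chi p k a = if a % p ^ (Nat.log p k + 1) = k then 1 else 0 := by
  have hk : k % p ^ (Nat.log p k + 1) = k :=
    Nat.mod_eq_of_lt (Nat.lt_pow_succ_log_self (Fact.out : p.Prime).one_lt k)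
  have hsub : (a : ℤ_[p]) - k = ((a - k : ℤ) : ℤ_[p]) := by push_cast; ring
  unfold chi
  refine if_congr ?_ rfl rfl
  rw [hsub, ← zpow_natCast, ← zpow_neg, PadicInt.norm_int_le_pow_iff_dvd,
    show ((p : ℤ) ^ (Nat.log p k + 1)) = ((p ^ (Nat.log p k + 1) : ℕ) : ℤ) by push_cast; rfl,
    ← Nat.modEq_iff_dvd, Nat.ModEq, hk, eq_comm]

theorem chi_natCast_eq_zero_of_lt {k a : ℕ} (h : a < k) : chi p k a = 0 := by
  rw [chi_natCast, if_neg]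
  exact ((Nat.mod_le _ _).trans_lt h).ne

theorem chi_natCast_self (m : ℕ) : chi p m m = 1 := by
  rw [chi_natCast, if_pos (Nat.mod_eq_of_lt (Nat.lt_pow_succ_log_self (Fact.out : p.Prime).one_lt m))]

theorem chi_natCast_mod_pow_log {k m : ℕ} (hpm : p ≤ m) (hkm : k < m) :
    chi p k (m % p ^ Nat.log p m : ℕ) = chi p k m := by
  have hp := (Fact.out : p.Prime).one_lt
  have hps : 0 < p ^ Nat.log p m := pow_pos (by omega) _
  rw [chi_natCast, chi_natCast]
  by_cases hks : Nat.log p k + 1 ≤ Nat.log p m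
  · rw [Nat.mod_mod_of_dvd _ (Nat.pow_dvd_pow p hks)]
  have hlog : Nat.log p k = Nat.log p m := by
    have := Nat.log_mono_right (b := p) hkm.le
    omega
  have hk0 : k ≠ 0 := by
    rintro rfl
    have := Nat.log_pos hp hpm
    simp_all
  have hpk : p ^ Nat.log p m ≤ k := hlog ▸ Nat.pow_log_le_self p hk0
  rw [if_neg, if_neg] <;> rw [hlog]
  · rw [Nat.mod_eq_of_lt (Nat.lt_pow_succ_log_self hp m)]
    exact hkm.ne'
  · rw [Nat.mod_eq_of_lt ((Nat.mod_lt _ hps).trans (Nat.pow_lt_pow_succ hp))]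
    exact ((Nat.mod_lt _ hps).trans_le hpk).ne

theorem chi_eq_of_norm_sub_le {m : ℕ} {x y : ℤ_[p]}
    (h : ‖x - y‖ ≤ ((p : ℝ) ^ (Nat.log p m + 1))⁻¹) : chi p m x = chi p m y := by
  set r := ((p : ℝ) ^ (Nat.log p m + 1))⁻¹
  have key : ∀ {a b : ℤ_[p]}, dist a b ≤ r → dist a (m : ℤ_[p]) ≤ r → dist b m ≤ r :=
    fun {a b} hab ham => (IsUltrametricDist.dist_triangle_max b a m).trans
      (max_le (by rwa [dist_comm]) ham)
  rw [← dist_eq_norm] at h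
  simp only [chi, ← dist_eq_norm]
  exact if_congr ⟨key h, key (dist_comm x y ▸ h)⟩ rfl rfl

theorem norm_mul_chi_sub_le {b : ℤ_[p]} {m : ℕ} (hb : ‖b‖ ≤ ((p : ℝ) ^ Nat.log p m)⁻¹)
    (x y : ℤ_[p]) : ‖b * chi p m x - b * chi p m y‖ ≤ ‖x - y‖ := by
  by_cases h : ‖x - y‖ ≤ ((p : ℝ) ^ (Nat.log p m + 1))⁻¹
  · rw [chi_eq_of_norm_sub_le h, sub_self, norm_zero]
    exact norm_nonneg _
  calc ‖b * chi p m x - b * chi p m y‖ = ‖b‖ * ‖chi p m x - chi p m y‖ := by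
        rw [← mul_sub, norm_mul]
    _ ≤ ((p : ℝ) ^ Nat.log p m)⁻¹ * 1 :=
        mul_le_mul hb (PadicInt.norm_le_one _) (norm_nonneg _) (by positivity)
    _ ≤ ‖x - y‖ := by
        rw [mul_one]
        exact PadicInt.inv_pow_le_norm_of_inv_pow_succ_lt (not_le.1 h)

variable {f : ℤ_[p] → ℤ_[p]} {B : ℕ → ℤ_[p]}

theorem summable_mul_chi (hB : Tendsto B cofinite (𝓝 0)) (x : ℤ_[p]) :
    Summable fun m => B m * chi p m x :=
  NonarchimedeanAddGroup.summable_of_tendsto_cofinite_zero <|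
    hB.zero_mul_isBoundedUnder_le (isBoundedUnder_of ⟨1, fun _ => PadicInt.norm_le_one _⟩)

theorem vdpExpansion.apply_natCast (hB : vdpExpansion p f B) {a N : ℕ} (haN : a < N) :
    f a = ∑ k ∈ range N, B k * chi p k a := by
  rw [hB]
  refine tsum_eq_sum fun k hk => ?_
  rw [chi_natCast_eq_zero_of_lt (haN.trans_le (by simpa using hk)), mul_zero]

theorem vdpExpansion.coeff_eq_sub (hB : vdpExpansion p f B) {m : ℕ} (hpm : p ≤ m) :
    B m = f m - f (m % p ^ Nat.log p m : ℕ) := by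
  have hp := (Fact.out : p.Prime).pos
  have hr : m % p ^ Nat.log p m < m :=
    (Nat.mod_lt _ (pow_pos hp _)).trans_le (Nat.pow_log_le_self p (by omega))
  have hsum : ∑ k ∈ range m, B k * chi p k (m % p ^ Nat.log p m : ℕ) =
      ∑ k ∈ range m, B k * chi p k m :=
    sum_congr rfl fun k hk => by rw [chi_natCast_mod_pow_log hpm (mem_range.1 hk)]
  rw [hB.apply_natCast m.lt_succ_self, hB.apply_natCast (hr.trans m.lt_succ_self),
    sum_range_succ, sum_range_succ, chi_natCast_self, chi_natCast_eq_zero_of_lt hr, hsum]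
  ring

theorem IsLip.norm_coeff_le (hf : IsLip p f) (hB : vdpExpansion p f B) (m : ℕ) :
    ‖B m‖ ≤ ((p : ℝ) ^ Nat.log p m)⁻¹ := by
  rcases lt_or_ge m p with hm | hm
  · simpa [Nat.log_of_lt hm] using PadicInt.norm_le_one (B m)
  calc ‖B m‖ = ‖f m - f (m % p ^ Nat.log p m : ℕ)‖ := by rw [hB.coeff_eq_sub hm]
    _ ≤ ‖(m : ℤ_[p]) - (m % p ^ Nat.log p m : ℕ)‖ := hf _ _
    _ ≤ ((p : ℝ) ^ Nat.log p m)⁻¹ := PadicInt.norm_natCast_sub_mod_pow_le m _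

theorem vdpExpansion.isLip (hB : vdpExpansion p f B)
    (hb : ∀ m, ‖B m‖ ≤ ((p : ℝ) ^ Nat.log p m)⁻¹) : IsLip p f := by
  have hB0 : Tendsto B cofinite (𝓝 0) := by
    rw [Nat.cofinite_eq_atTop]
    exact squeeze_zero_norm hb (Nat.tendsto_inv_pow_log_atTop (Fact.out : p.Prime).one_lt)
  intro x y
  rw [hB x, hB y, ← (summable_mul_chi hB0 x).tsum_sub (summable_mul_chi hB0 y)]
  exact IsUltrametricDist.norm_tsum_le_of_forall_le_of_nonneg (norm_nonneg _)
    fun m => norm_mul_chi_sub_le (hb m) x y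

end VDP

open VDP in
theorem stmt4_general (p : ℕ) [Fact p.Prime] (f : ℤ_[p] → ℤ_[p]) (B : ℕ → ℤ_[p])
    (hB : vdpExpansion p f B) :
    IsLip p f ↔ ∀ m : ℕ, ‖B m‖ ≤ ((p : ℝ) ^ Nat.log p m)⁻¹ :=
  ⟨fun hf => hf.norm_coeff_le hB, hB.isLip⟩

open VDP in
theorem stmt4 (p : ℕ) [Fact p.Prime] (f : ℤ_[p] → ℤ_[p]) (B : ℕ → ℤ_[p])
    (hc : Continuous f) (hB : vdpExpansion p f B) :
    IsLip p f ↔ ∀ m : ℕ, ‖B m‖ ≤ ((p : ℝ) ^ Nat.log p m)⁻¹ :=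
  stmt4_general p f B hB
end

section
/- Let g : ℤ_p → ℤ_p be a 1-Lipschitz function and d ∈ ℤ_p with d ≢ 0 (mod p). Then the function f(x) = d + x + p·(g(x+1) − g(x)) is ergodic on ℤ_p. -/
open MeasureTheory Finset

/-!
Write `F x = d + x + p·Δg(x)`. Since `g` is 1-Lipschitz, `‖p·(Δg(x) - Δg(y))‖ < ‖x - y‖`
for `x ≠ y`, so `F` is an isometry and permutes the residues modulo every `p^n`; an isometry of
`ℤ_p` that is transitive modulo every `p^n` is ergodic for Haar measure, because an invariant set
then meets all residue classes of level `n` in the same measure.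

Transitivity is proved by showing that every orbit of `F` modulo `p^n` has length exactly `p^n`.
Iterating, `F^[p^n] x = x + p^n d + p ∑_{j < p^n} Δg(F^[j] x)`. If the orbit of `x` modulo `p^n`
is a full cycle, the `F^[j] x` for `j < p^n` form a complete residue system, so modulo `p^n` the
sum equals `∑_{m < p^n} Δg(m) = g(p^n) - g(0) ≡ 0`. Hence `F^[p^n] x ≡ x + p^n d` modulo
`p^(n+1)`, and as `p ∤ d` the orbit modulo `p^(n+1)` has length `p^(n+1)`.
-/

open PadicInt Function Set Filter
open scoped ENNReal

namespace VDP

variable {p : ℕ} [Fact p.Prime]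

section Congruences

theorem pow_dvd_sub_iff_dist_le {n : ℕ} {x y : ℤ_[p]} :
    (p : ℤ_[p]) ^ n ∣ x - y ↔ dist x y ≤ (p : ℝ) ^ (-(n : ℤ)) := by
  rw [dist_eq_norm, norm_le_pow_iff_mem_span_pow, Ideal.mem_span_singleton]

theorem toZModPow_eq_iff_pow_dvd_sub {n : ℕ} {x y : ℤ_[p]} :
    toZModPow n x = toZModPow n y ↔ (p : ℤ_[p]) ^ n ∣ x - y := by
  rw [← sub_eq_zero, ← map_sub, ← RingHom.mem_ker, ker_toZModPow, Ideal.mem_span_singleton]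

theorem toZModPow_natCast_val {n : ℕ} (a : ZMod (p ^ n)) : toZModPow n (a.val : ℤ_[p]) = a := by
  rw [map_natCast, ZMod.natCast_zmod_val]

theorem IsLip.pow_dvd_sub {g : ℤ_[p] → ℤ_[p]} (hg : IsLip p g) {n : ℕ} {x y : ℤ_[p]}
    (h : (p : ℤ_[p]) ^ n ∣ x - y) : (p : ℤ_[p]) ^ n ∣ g x - g y := by
  rw [pow_dvd_sub_iff_dist_le, dist_eq_norm] at h ⊢
  exact (hg x y).trans h

theorem pow_dvd_sum_sub_sum_of_bijective {n : ℕ} {h : ℤ_[p] → ℤ_[p]}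
    (hh : ∀ x y, (p : ℤ_[p]) ^ n ∣ x - y → (p : ℤ_[p]) ^ n ∣ h x - h y) {c c' : ℕ → ℤ_[p]}
    (hc : Bijective fun j : Fin (p ^ n) => toZModPow n (c j))
    (hc' : Bijective fun j : Fin (p ^ n) => toZModPow n (c' j)) :
    (p : ℤ_[p]) ^ n ∣
      ∑ j ∈ Finset.range (p ^ n), h (c j) - ∑ j ∈ Finset.range (p ^ n), h (c' j) := by
  have sum_congr_residues : ∀ c : ℕ → ℤ_[p],
      (Bijective fun j : Fin (p ^ n) => toZModPow n (c j)) → (p : ℤ_[p]) ^ n ∣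
        ∑ j ∈ Finset.range (p ^ n), h (c j) - ∑ a : ZMod (p ^ n), h (a.val : ℤ_[p]) := by
    intro c hc
    rw [← Fin.sum_univ_eq_sum_range (fun j => h (c j)),
      ← Fintype.sum_bijective _ hc (fun j => h ((toZModPow n (c j)).val : ℤ_[p])) _ fun _ => rfl,
      ← Finset.sum_sub_distrib]
    refine Finset.dvd_sum fun j _ => hh _ _ ?_
    rw [← toZModPow_eq_iff_pow_dvd_sub, toZModPow_natCast_val]
  simpa using dvd_sub (sum_congr_residues c hc) (sum_congr_residues c' hc')

theorem bijective_toZModPow_natCast (n : ℕ) :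
    Bijective fun j : Fin (p ^ n) => toZModPow n ((j : ℕ) : ℤ_[p]) := by
  rw [Fintype.bijective_iff_injective_and_card, ZMod.card, Fintype.card_fin]
  refine ⟨fun i j hij => Fin.ext ?_, rfl⟩
  simpa [ZMod.val_cast_of_lt i.isLt, ZMod.val_cast_of_lt j.isLt] using congrArg ZMod.val hij

end Congruences

section ResidueClasses

open MeasureTheory Measure TopologicalSpace Metric

variable (p) in
def residueClass (n : ℕ) (a : ZMod (p ^ n)) : Set ℤ_[p] := toZModPow n ⁻¹' {a}

@[simp]
theorem mem_residueClass {n : ℕ} {a : ZMod (p ^ n)} {x : ℤ_[p]} :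
    x ∈ residueClass p n a ↔ toZModPow n x = a := Iff.rfl

theorem residueClass_toZModPow (n : ℕ) (x : ℤ_[p]) :
    residueClass p n (toZModPow n x) = closedBall x ((p : ℝ) ^ (-(n : ℤ))) := by
  ext y
  rw [mem_residueClass, mem_closedBall, toZModPow_eq_iff_pow_dvd_sub, pow_dvd_sub_iff_dist_le]

theorem isOpen_residueClass (n : ℕ) (a : ZMod (p ^ n)) : IsOpen (residueClass p n a) := by
  rw [← toZModPow_natCast_val a, residueClass_toZModPow]
  exact IsUltrametricDist.isOpen_closedBall _
    (zpow_ne_zero _ (by exact_mod_cast (Fact.out : p.Prime).ne_zero))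

theorem measurableSet_residueClass {n : ℕ} {a : ZMod (p ^ n)} :
    MeasurableSet (residueClass p n a) :=
  (isOpen_residueClass n a).measurableSet

theorem residueClass_zero (a : ZMod (p ^ 0)) : residueClass p 0 a = univ :=
  eq_univ_of_forall fun _ => (ZMod.subsingleton_iff.2 (pow_zero p)).elim _ _

variable (p) in
def residueClasses : Set (Set ℤ_[p]) :=
  {s | ∃ (n : ℕ) (a : ZMod (p ^ n)), residueClass p n a = s}

theorem isTopologicalBasis_residueClasses : IsTopologicalBasis (residueClasses p) := by
  refine isTopologicalBasis_of_isOpen_of_nhds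
    (by rintro _ ⟨n, a, rfl⟩; exact isOpen_residueClass n a) fun x U hxU hU => ?_
  obtain ⟨ε, hε, hball⟩ := Metric.isOpen_iff.1 hU x hxU
  obtain ⟨n, hn⟩ := exists_pow_neg_lt p hε
  refine ⟨_, ⟨n, toZModPow n x, rfl⟩, rfl, ?_⟩
  rw [residueClass_toZModPow]
  exact (closedBall_subset_ball hn).trans hball

theorem isPiSystem_residueClasses : IsPiSystem (residueClasses p) := by
  have hmono : ∀ {n m : ℕ} (x : ℤ_[p]), n ≤ m →
      residueClass p m (toZModPow m x) ⊆ residueClass p n (toZModPow n x) := fun _ h => by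
    rw [residueClass_toZModPow, residueClass_toZModPow]
    exact closedBall_subset_closedBall
      (zpow_le_zpow_right₀ (by exact_mod_cast (Fact.out : p.Prime).one_le) (by omega))
  rintro _ ⟨n, a, rfl⟩ _ ⟨m, b, rfl⟩ ⟨x, rfl : toZModPow n x = a, rfl : toZModPow m x = b⟩
  rcases le_total n m with h | h
  · exact ⟨m, _, (inter_eq_right.2 (hmono x h)).symm⟩
  · exact ⟨n, _, (inter_eq_left.2 (hmono x h)).symm⟩

theorem ext_of_residueClass {μ ν : Measure ℤ_[p]} [IsFiniteMeasure μ]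
    (h : ∀ n a, μ (residueClass p n a) = ν (residueClass p n a)) : μ = ν :=
  ext_of_generate_finite _
    (BorelSpace.measurable_eq.trans isTopologicalBasis_residueClasses.borel_eq_generateFrom)
    isPiSystem_residueClasses (by rintro _ ⟨n, a, rfl⟩; exact h n a)
    (by simpa [residueClass_zero] using h 0 0)

theorem measure_residueClass_of_forall_eq {μ : Measure ℤ_[p]} {n : ℕ}
    (h : ∀ a b, μ (residueClass p n a) = μ (residueClass p n b)) (a : ZMod (p ^ n)) :
    μ (residueClass p n a) = μ univ / (p : ℝ≥0∞) ^ n := by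
  have hp : (p : ℝ≥0∞) ≠ 0 := by exact_mod_cast (Fact.out : p.Prime).ne_zero
  rw [ENNReal.eq_div_iff (pow_ne_zero n hp) (ENNReal.pow_ne_top (ENNReal.natCast_ne_top p))]
  have hsum := sum_measure_preimage_singleton (μ := μ) (Finset.univ : Finset (ZMod (p ^ n)))
    fun b _ => measurableSet_residueClass (a := b)
  change ∑ b, μ (residueClass p n b) =
    μ (toZModPow n ⁻¹' ↑(Finset.univ : Finset (ZMod (p ^ n)))) at hsum
  rw [Finset.coe_univ, preimage_univ, Finset.sum_congr rfl fun b _ => h b a, Finset.sum_const,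
    Finset.card_univ, ZMod.card, nsmul_eq_mul] at hsum
  rw [← hsum, Nat.cast_pow]

instance inst_s11 : IsProbabilityMeasure (haarZp p) :=
  ⟨addHaarMeasure_self (K₀ := ⊤)⟩

instance : (haarZp p).IsAddLeftInvariant :=
  isAddLeftInvariant_addHaarMeasure ⊤

theorem haarZp_residueClass (n : ℕ) (a : ZMod (p ^ n)) :
    haarZp p (residueClass p n a) = 1 / (p : ℝ≥0∞) ^ n := by
  have htranslate : ∀ b, haarZp p (residueClass p n b) = haarZp p (residueClass p n 0) := by
    intro b
    have : (fun x => (b.val : ℤ_[p]) + x) ⁻¹' residueClass p n b = residueClass p n 0 := by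
      ext x
      simp
    rw [← this, measure_preimage_add]
  rw [measure_residueClass_of_forall_eq (fun a b => (htranslate a).trans (htranslate b).symm),
    measure_univ]

end ResidueClasses

section Ergodicity

open MeasureTheory Measure

theorem eventuallyConst_ae_of_restrict_eq_smul {α : Type*} [MeasurableSpace α] {μ : Measure α}
    [IsProbabilityMeasure μ] {s : Set α} (hs : MeasurableSet s) (h : μ.restrict s = μ s • μ) :
    EventuallyConst s (ae μ) := by
  have hsq : μ s * 1 = μ s * μ s := by
    simpa [hs] using congrArg (· s) h
  rw [eventuallyConst_set', ae_eq_empty, ae_eq_univ, prob_compl_eq_zero_iff hs]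
  refine (eq_or_ne (μ s) 0).imp id fun h0 => ?_
  exact ((ENNReal.mul_right_inj h0 (measure_ne_top μ s)).1 hsq).symm

variable {f : ℤ_[p] → ℤ_[p]}

theorem preimage_residueClass_of_isometry (hf : Isometry f) (n : ℕ) (x : ℤ_[p]) :
    f ⁻¹' residueClass p n (toZModPow n (f x)) = residueClass p n (toZModPow n x) := by
  ext y
  simp only [Set.mem_preimage, residueClass_toZModPow, Metric.mem_closedBall, hf.dist_eq]

theorem TransModPow.exists_toZModPow_apply_eq {n : ℕ} (ht : TransModPow p f n)
    (a : ZMod (p ^ n)) : ∃ x, toZModPow n (f x) = a :=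
  let ⟨k, hk⟩ := ht (f 0) a
  ⟨f^[k] 0, by rwa [← iterate_succ_apply' f, iterate_succ_apply]⟩

theorem measurePreserving_haarZp_of_isometry_s11 (hf : Isometry f) (ht : ∀ n, TransModPow p f n) :
    MeasurePreserving f (haarZp p) (haarZp p) := by
  refine ⟨hf.continuous.measurable, ext_of_residueClass fun n a => ?_⟩
  obtain ⟨x, rfl⟩ := (ht n).exists_toZModPow_apply_eq a
  rw [map_apply hf.continuous.measurable measurableSet_residueClass,
    preimage_residueClass_of_isometry hf, haarZp_residueClass, haarZp_residueClass]

theorem ergodic_haarZp_of_isometry (hf : Isometry f) (ht : ∀ n, TransModPow p f n) :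
    Ergodic f (haarZp p) := by
  have hmp := measurePreserving_haarZp_of_isometry_s11 hf ht
  refine ⟨hmp, ⟨fun s hs hfs => eventuallyConst_ae_of_restrict_eq_smul hs ?_⟩⟩
  refine ext_of_residueClass fun n a => ?_
  have hstep : ∀ x, haarZp p (s ∩ residueClass p n (toZModPow n (f x))) =
      haarZp p (s ∩ residueClass p n (toZModPow n x)) := fun x => by
    rw [← hmp.measure_preimage (hs.inter measurableSet_residueClass).nullMeasurableSet,
      preimage_inter, hfs, preimage_residueClass_of_isometry hf]
  -- along an orbit the measure is constant, and every orbit meets every residue class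
  have hconst : ∀ b, haarZp p (s ∩ residueClass p n b) =
      haarZp p (s ∩ residueClass p n (toZModPow n 0)) := fun b => by
    obtain ⟨k, rfl⟩ := ht n 0 b
    induction k with
    | zero => rfl
    | succ k ih => rw [iterate_succ_apply', hstep, ih]
  rw [measure_residueClass_of_forall_eq (μ := (haarZp p).restrict s) (fun b c => by
      simp only [Measure.restrict_apply measurableSet_residueClass, inter_comm _ s, hconst]),
    Measure.smul_apply, haarZp_residueClass, restrict_apply_univ, smul_eq_mul, mul_one_div]

end Ergodicity

section FullCycle

def IsFullCycleModPow (p : ℕ) [Fact p.Prime] (f : ℤ_[p] → ℤ_[p]) (n : ℕ) : Prop :=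
  ∀ x k, (p : ℤ_[p]) ^ n ∣ f^[k] x - x ↔ p ^ n ∣ k

variable {f : ℤ_[p] → ℤ_[p]} {n : ℕ}

theorem IsFullCycleModPow.bijective_toZModPow_iterate (hf : IsFullCycleModPow p f n)
    (x : ℤ_[p]) : Bijective fun j : Fin (p ^ n) => toZModPow n (f^[j] x) := by
  rw [Fintype.bijective_iff_injective_and_card, ZMod.card, Fintype.card_fin]
  refine ⟨?_, rfl⟩
  suffices h : ∀ i j : Fin (p ^ n), (i : ℕ) ≤ j →
      toZModPow n (f^[i] x) = toZModPow n (f^[j] x) → i = j from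
    fun i j hij => (le_total (i : ℕ) j).elim (h i j · hij) fun hji => (h j i hji hij.symm).symm
  intro i j hij hres
  rw [eq_comm, toZModPow_eq_iff_pow_dvd_sub, ← Nat.sub_add_cancel hij, iterate_add_apply,
    hf] at hres
  have := Nat.eq_zero_of_dvd_of_lt hres ((Nat.sub_le _ _).trans_lt j.isLt)
  exact Fin.ext (by omega)

theorem IsFullCycleModPow.transModPow (hf : IsFullCycleModPow p f n) : TransModPow p f n :=
  fun x a => let ⟨j, hj⟩ := (hf.bijective_toZModPow_iterate x).2 a; ⟨j, hj⟩

end FullCycle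

section PerturbedTranslation

noncomputable def perturbedTranslation (g : ℤ_[p] → ℤ_[p]) (d x : ℤ_[p]) : ℤ_[p] :=
  d + x + p * (g (x + 1) - g x)

variable {g : ℤ_[p] → ℤ_[p]} {d : ℤ_[p]}

local notation "F" => perturbedTranslation g d

theorem isometry_perturbedTranslation (hg : IsLip p g) : Isometry F := by
  refine Isometry.of_dist_eq fun x y => ?_
  rcases eq_or_ne x y with rfl | hxy
  · simp
  have hΔ : ‖(g (x + 1) - g (y + 1)) - (g x - g y)‖ ≤ ‖x - y‖ := by
    rw [sub_eq_add_neg]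
    refine (PadicInt.nonarchimedean _ _).trans (max_le ?_ ?_)
    · simpa using hg (x + 1) (y + 1)
    · rw [norm_neg]; exact hg x y
  have hsmall : ‖(p : ℤ_[p]) * ((g (x + 1) - g (y + 1)) - (g x - g y))‖ < ‖x - y‖ := by
    rw [norm_mul, norm_p]
    calc (p : ℝ)⁻¹ * _ ≤ (p : ℝ)⁻¹ * ‖x - y‖ := by gcongr
      _ < ‖x - y‖ := mul_lt_of_lt_one_left (norm_pos_iff.2 (sub_ne_zero.2 hxy))
          (inv_lt_one_of_one_lt₀ (by exact_mod_cast (Fact.out : p.Prime).one_lt))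
  have hdiff : F x - F y = (x - y) + p * ((g (x + 1) - g (y + 1)) - (g x - g y)) := by
    unfold perturbedTranslation; ring
  rw [dist_eq_norm, dist_eq_norm, hdiff,
    IsUltrametricDist.norm_add_eq_max_of_norm_ne_norm hsmall.ne', max_eq_left hsmall.le]

theorem perturbedTranslation_iterate (k : ℕ) (x : ℤ_[p]) :
    F^[k] x = x + k * d + p * ∑ j ∈ Finset.range k, (g (F^[j] x + 1) - g (F^[j] x)) := by
  induction k with
  | zero => simp
  | succ k ih =>
    rw [iterate_succ_apply', Finset.sum_range_succ, perturbedTranslation, ih]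
    push_cast
    ring

theorem pow_succ_dvd_iterate_pow_sub (hg : IsLip p g) {n : ℕ} (hF : IsFullCycleModPow p F n)
    (x : ℤ_[p]) : (p : ℤ_[p]) ^ (n + 1) ∣ F^[p ^ n] x - (x + p ^ n * d) := by
  have hΔ : ∀ x y, (p : ℤ_[p]) ^ n ∣ x - y →
      (p : ℤ_[p]) ^ n ∣ (g (x + 1) - g x) - (g (y + 1) - g y) := fun x y h => by
    simpa [sub_sub_sub_comm] using
      dvd_sub (hg.pow_dvd_sub (x := x + 1) (y := y + 1) (by simpa using h)) (hg.pow_dvd_sub h)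
  have hcycle := pow_dvd_sum_sub_sum_of_bijective hΔ (c := fun j => F^[j] x)
    (hF.bijective_toZModPow_iterate x) (bijective_toZModPow_natCast n)
  have htele := Finset.sum_range_sub (fun m : ℕ => g m) (p ^ n)
  push_cast at htele
  rw [htele] at hcycle
  have hends : (p : ℤ_[p]) ^ n ∣ g ((p ^ n : ℕ) : ℤ_[p]) - g ((0 : ℕ) : ℤ_[p]) :=
    hg.pow_dvd_sub (by simp)
  push_cast at hends
  have hiter : F^[p ^ n] x - (x + p ^ n * d) =
      p * ∑ j ∈ Finset.range (p ^ n), (g (F^[j] x + 1) - g (F^[j] x)) := by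
    rw [perturbedTranslation_iterate]; push_cast; ring
  rw [hiter, pow_succ']
  exact mul_dvd_mul_left _ (by simpa using dvd_add hcycle hends)

theorem pow_succ_dvd_iterate_pow_mul_sub (hg : IsLip p g) {n : ℕ} (hF : IsFullCycleModPow p F n)
    (x : ℤ_[p]) (m : ℕ) :
    (p : ℤ_[p]) ^ (n + 1) ∣ F^[p ^ n * m] x - (x + (p ^ n * m : ℕ) * d) := by
  induction m with
  | zero => simp
  | succ m ih =>
    rw [mul_add_one, add_comm (p ^ n * m), iterate_add_apply]
    convert dvd_add (pow_succ_dvd_iterate_pow_sub hg hF (F^[p ^ n * m] x)) ih using 1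
    push_cast
    ring

theorem isFullCycleModPow_succ (hg : IsLip p g) (hd : ¬ (p : ℤ_[p]) ∣ d) {n : ℕ}
    (hF : IsFullCycleModPow p F n) : IsFullCycleModPow p F (n + 1) := by
  intro x k
  constructor
  · intro hk
    obtain ⟨m, rfl⟩ : p ^ n ∣ k := (hF x k).1 ((pow_dvd_pow _ n.le_succ).trans hk)
    have hmd : (p : ℤ_[p]) ^ (n + 1) ∣ (p ^ n * m : ℕ) * d := by
      simpa using dvd_sub hk (pow_succ_dvd_iterate_pow_mul_sub hg hF x m)
    push_cast at hmd
    rw [pow_succ, mul_assoc, mul_dvd_mul_iff_left (pow_ne_zero n prime_p.ne_zero)] at hmd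
    have hm : (p : ℤ) ∣ m := by
      simpa using (pow_p_dvd_int_iff 1 m).1
        (by simpa using (prime_p.dvd_or_dvd hmd).resolve_right hd)
    rw [pow_succ]
    exact mul_dvd_mul_left _ (Int.natCast_dvd_natCast.1 hm)
  · rintro ⟨m, rfl⟩
    have hm := pow_succ_dvd_iterate_pow_mul_sub hg hF x (p * m)
    rw [← mul_assoc, ← pow_succ] at hm
    have hmd : (p : ℤ_[p]) ^ (n + 1) ∣ (p ^ (n + 1) * m : ℕ) * d := by
      push_cast
      exact (dvd_mul_right _ _).mul_right d
    convert dvd_add hm hmd using 1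
    push_cast
    ring

theorem isFullCycleModPow_perturbedTranslation (hg : IsLip p g) (hd : ¬ (p : ℤ_[p]) ∣ d)
    (n : ℕ) : IsFullCycleModPow p F n := by
  induction n with
  | zero => simp [IsFullCycleModPow]
  | succ n ih => exact isFullCycleModPow_succ hg hd ih

end PerturbedTranslation

end VDP

open VDP MeasureTheory in
theorem stmt11 (p : ℕ) [Fact p.Prime] (g : ℤ_[p] → ℤ_[p]) (hg : IsLip p g)
    (d : ℤ_[p]) (hd : ¬ (p : ℤ_[p]) ∣ d) :
    Ergodic (fun x => d + x + (p : ℤ_[p]) * (g (x + 1) - g x)) (haarZp p) :=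
  ergodic_haarZp_of_isometry (isometry_perturbedTranslation hg)
    fun n => (isFullCycleModPow_perturbedTranslation hg hd n).transModPow
end
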